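/- Let η = (1 + i·√3)/2 ∈ ℂ, and define the polynomial maps f₁(z₁,z₂,z₃,z₄) = z₄(1 − z₃) − z₃·z₂·(1 − z₄)(1 − z₁), f₂(z₁,z₂,z₃,z₄) = z₄(1 − z₃) − z₁(1 − z₂), f₃(z₁,z₂,z₃,z₄) = 1 − z₁(1 − z₃). Then the 3×3 matrix whose (i,j) entry is the partial derivative of f_i with respect to the j-th of the variables (z₁, z₃, z₄), evaluated at z₁ = z₂ = z₃ = z₄ = η, is invertible; in fact its determinant equals −2(η + 1) ≠ 0. -/

import Mathlib

/-- First edge equation of the triangulation of the Berge manifold. -/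
noncomputable def bergeF₁ (z₁ z₂ z₃ z₄ : ℂ) : ℂ :=
  z₄ * (1 - z₃) - z₃ * z₂ * (1 - z₄) * (1 - z₁)

/-- Second edge equation of the triangulation of the Berge manifold. -/
noncomputable def bergeF₂ (z₁ z₂ z₃ z₄ : ℂ) : ℂ :=
  z₄ * (1 - z₃) - z₁ * (1 - z₂)

/-- Completeness equation `μ(𝔪) = 1` for the cusp of the Berge manifold corresponding to
the unknotted component. -/
noncomputable def bergeF₃ (z₁ z₂ z₃ z₄ : ℂ) : ℂ :=
  1 - z₁ * (1 - z₃)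

/-- The shape parameter of the regular ideal tetrahedron. -/
noncomputable def bergeEta : ℂ := (1 + Complex.I * Real.sqrt 3) / 2

/-- The matrix of partial derivatives of `(f₁, f₂, f₃)` with respect to `(z₁, z₃, z₄)`,
evaluated at the complete structure `z₁ = z₂ = z₃ = z₄ = η`. -/
noncomputable def bergeJacobian : Matrix (Fin 3) (Fin 3) ℂ :=
  !![deriv (fun t => bergeF₁ t bergeEta bergeEta bergeEta) bergeEta,
     deriv (fun t => bergeF₁ bergeEta bergeEta t bergeEta) bergeEta,
     deriv (fun t => bergeF₁ bergeEta bergeEta bergeEta t) bergeEta;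
     deriv (fun t => bergeF₂ t bergeEta bergeEta bergeEta) bergeEta,
     deriv (fun t => bergeF₂ bergeEta bergeEta t bergeEta) bergeEta,
     deriv (fun t => bergeF₂ bergeEta bergeEta bergeEta t) bergeEta;
     deriv (fun t => bergeF₃ t bergeEta bergeEta bergeEta) bergeEta,
     deriv (fun t => bergeF₃ bergeEta bergeEta t bergeEta) bergeEta,
     deriv (fun t => bergeF₃ bergeEta bergeEta bergeEta t) bergeEta]


/-! Each `fᵢ` is affine in each variable separately, so every partial derivative is the
coefficient of that variable. Expanding the determinant and reducing with `η² = η - 1` leaves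
`-2(η + 1)`, which is nonzero because `Re η = 1/2`. -/

theorem deriv_eq_of_affine {𝕜 : Type*} [NontriviallyNormedField 𝕜] {f : 𝕜 → 𝕜} {a : 𝕜}
    (h : ∀ t, f t = a * t + f 0) (x : 𝕜) : deriv f x = a := by
  rw [funext h]
  exact (((hasDerivAt_id x).const_mul a).add_const (f 0)).deriv.trans (mul_one a)

local notation "η" => bergeEta

theorem bergeJacobian_eq : bergeJacobian =
    !![η ^ 2 * (1 - η), -η - η * (1 - η) ^ 2, 1 - η + η ^ 2 * (1 - η);
      η - 1, -η, 1 - η;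
      η - 1, η, 0] := by
  ext i j
  fin_cases i <;> fin_cases j <;> refine deriv_eq_of_affine (fun t => ?_) _ <;>
    simp [bergeF₁, bergeF₂, bergeF₃] <;> ring

theorem bergeEta_sq : η ^ 2 = η - 1 := by
  have h3 : (Real.sqrt 3 : ℂ) ^ 2 = 3 := by exact_mod_cast Real.sq_sqrt (by norm_num : (0 : ℝ) ≤ 3)
  unfold bergeEta
  linear_combination (Real.sqrt 3 : ℂ) ^ 2 / 4 * Complex.I_sq - h3 / 4

theorem det_bergeJacobian : bergeJacobian.det = -2 * (η + 1) := by
  rw [bergeJacobian_eq, Matrix.det_fin_three]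
  simp only [Matrix.of_apply, Matrix.cons_val', Matrix.cons_val_zero, Matrix.cons_val_fin_one,
    Matrix.cons_val_one, Matrix.cons_val]
  linear_combination (-2 * η ^ 3 + 4 * η + 2) * bergeEta_sq

theorem bergeEta_re : bergeEta.re = 1 / 2 := by simp [bergeEta]

theorem bergeEta_add_one_ne_zero : η + 1 ≠ 0 := by
  intro h
  have hre := congrArg Complex.re h
  norm_num [bergeEta_re] at hre

/-- The Jacobian matrix of the Berge manifold's gluing-plus-completeness equations in the
variables `(z₁, z₃, z₄)` at the complete structure is invertible, with determinant
`−2(η + 1) ≠ 0`. -/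
theorem berge_jacobian_invertible :
    bergeJacobian.det = -2 * (bergeEta + 1) ∧
    (-2 * (bergeEta + 1) : ℂ) ≠ 0 ∧
    IsUnit bergeJacobian := by
  have hne : (-2 * (bergeEta + 1) : ℂ) ≠ 0 := mul_ne_zero (by norm_num) bergeEta_add_one_ne_zero
  refine ⟨det_bergeJacobian, hne, ?_⟩
  rw [Matrix.isUnit_iff_isUnit_det, det_bergeJacobian]
  exact hne.isUnit
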